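/- arXiv:1405.2387 — 5 statements merged into one kernel-verified Lean document; each statement's English description precedes it below -/
import Mathlib

section
/- Fix η > 0, σ² > 0, g > 0, K a positive natural number, 0 < p < 1, and L₂ > 0. Set a = η·σ² + log(1+η), b = L₂, c = g·η/L₂, d = log(1+η) - log(1 - p^{1/K}), and assume d > 0. Then for L₁ > 0, the inequality a·L₁ + b·log(1 + c·L₁) ≤ d holds if and only if L₁ ≤ -1/c + (b/a)·W((a/(b·c))·exp(d/b + a/(b·c))), where W is the principal Lambert W function. -/
/-- Theorem 2 (Wyner model achievable transmission rank): with
`a = η σ² + log(1+η)`, `b = L₂`, `c = g η / L₂`, `d = log(1+η) - log(1-p^(1/K)) > 0`,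
for `L₁ > 0`: `a L₁ + b log(1 + c L₁) ≤ d ↔ L₁ ≤ -1/c + (b/a) W((a/(b c)) exp(d/b + a/(b c)))`,
where `W` is the principal Lambert W branch, represented by the value `w` with `-1 ≤ w`
and `w * exp w = (a/(b c)) * exp (d/b + a/(b c))`. -/
theorem stmt_4 (η σ2 g p L₂ : ℝ) (K : ℕ) (hK : 0 < K)
    (hη : 0 < η) (hσ : 0 < σ2) (hg : 0 < g) (hp0 : 0 < p) (hp1 : p < 1) (hL₂ : 0 < L₂)
    (a b c d : ℝ)
    (ha : a = η * σ2 + Real.log (1 + η)) (hb : b = L₂) (hc : c = g * η / L₂)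
    (hd : d = Real.log (1 + η) - Real.log (1 - p ^ ((1 : ℝ) / K))) (hd0 : 0 < d)
    (w : ℝ) (hw1 : -1 ≤ w)
    (hw2 : w * Real.exp w = (a / (b * c)) * Real.exp (d / b + a / (b * c)))
    (L₁ : ℝ) (hL₁ : 0 < L₁) :
    a * L₁ + b * Real.log (1 + c * L₁) ≤ d ↔ L₁ ≤ -1 / c + (b / a) * w := by
  have hlogη : 0 < Real.log (1 + η) := Real.log_pos (by linarith)
  have ha0 : 0 < a := by
    rw [ha]; nlinarith
  have hb0 : 0 < b := hb ▸ hL₂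
  have hc0 : 0 < c := by
    rw [hc]; positivity
  set x : ℝ := a / (b * c) with hx
  have hx0 : 0 < x := by positivity
  have hw0 : 0 < w := by
    have h1 : 0 < w * Real.exp w := by
      rw [hw2]; positivity
    nlinarith [Real.exp_pos w]
  have hlog : Real.log w + w = Real.log x + (d / b + x) := by
    have h := congrArg Real.log hw2
    rwa [Real.log_mul (ne_of_gt hw0) (Real.exp_ne_zero w), Real.log_exp,
      Real.log_mul (ne_of_gt hx0) (Real.exp_ne_zero _), Real.log_exp] at h
  set L : ℝ := -1 / c + (b / a) * w with hL
  have hcL : 1 + c * L = w / x := by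
    rw [hL, hx]
    field_simp
    ring
  have hcL0 : 0 < 1 + c * L := by rw [hcL]; positivity
  have hfL : a * L + b * Real.log (1 + c * L) = d := by
    rw [hcL, Real.log_div (ne_of_gt hw0) (ne_of_gt hx0)]
    have haL : a * L = -(b * x) + b * w := by
      rw [hL, hx]; field_simp
    have hdb : b * (d / b) = d := by field_simp
    linear_combination b * hlog + hdb + (a * c⁻¹) * mul_inv_cancel₀ (ne_of_gt hb0) + (b * w) * mul_inv_cancel₀ (ne_of_gt ha0)
  have h10 : 0 < 1 + c * L₁ := by positivity
  constructor
  · intro h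
    by_contra hlt
    push_neg at hlt
    have hlog' : Real.log (1 + c * L) < Real.log (1 + c * L₁) :=
      Real.log_lt_log hcL0 (by nlinarith)
    have h1 := mul_lt_mul_of_pos_left hlt ha0
    have h2 := mul_lt_mul_of_pos_left hlog' hb0
    linarith
  · intro h
    have hlog' : Real.log (1 + c * L₁) ≤ Real.log (1 + c * L) :=
      Real.log_le_log h10 (by nlinarith)
    have h1 := mul_le_mul_of_nonneg_left h (le_of_lt ha0)
    have h2 := mul_le_mul_of_nonneg_left hlog' (le_of_lt hb0)
    linarith
end

section
/- Fix η > 0, σ² > 0, α > 2, D > 0, and K a positive natural number. Let g be a random variable with CDF Φ_G(g) = 1 - g^{-2/α}/D² on [D^{-α}, ∞), arising as g = d^{-α} where d has CDF (d/D)² on [0,D]. Then E[1 - exp(-η·σ²·L/g)/(1+η)^{L-1}] = 1 - (2/(α·D²·(1+η)^{L-1})) · γ(2/α, η·σ²·L·D^α)/(η·σ²·L)^{2/α}, where γ is the lower incomplete gamma function. -/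
/-! The CDF hypothesis says that the path loss `X` is Pareto distributed with scale `t = D^(-α)`
and shape `p = 2/α`. Against the Pareto density `p t^p x^(-p-1)` on `[t, ∞)`, the substitution
`u = c/x` turns `E[exp(-c/X)]` into `p t^p c^(-p) ∫₀^(c/t) u^(p-1) e^(-u) du`, a lower incomplete
gamma function, and `E[1 - exp(-c/X)/B] = 1 - E[exp(-c/X)]/B`. -/

open MeasureTheory Set

lemma image_const_div_Ioi_of_pos {𝕜 : Type*} [Field 𝕜] [LinearOrder 𝕜] [IsStrictOrderedRing 𝕜]
    {t c : 𝕜} (ht : 0 < t) (hc : 0 < c) :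
    (fun x => c / x) '' Ioi t = Ioo 0 (c / t) := by
  ext u
  constructor
  · rintro ⟨x, hx, rfl⟩
    exact ⟨div_pos hc (ht.trans hx), div_lt_div_of_pos_left hc ht hx⟩
  · rintro ⟨hu, hut⟩
    refine ⟨c / u, ?_, div_div_cancel₀ hc.ne'⟩
    rwa [mem_Ioi, lt_div_iff₀ hu, ← lt_div_iff₀' ht]

lemma integral_Ioi_rpow_smul_comp_const_div {E : Type*} [NormedAddCommGroup E]
    [NormedSpace ℝ E] (r : ℝ) {t c : ℝ} (ht : 0 < t) (hc : 0 < c) (g : ℝ → E) :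
    ∫ x in Ioi t, x ^ (-(r + 1)) • g (c / x) =
      c ^ (-r) • ∫ u in Ioo 0 (c / t), u ^ (r - 1) • g u := by
  have hderiv : ∀ x ∈ Ioi t, HasDerivWithinAt (fun x => c / x) (-(c / x ^ 2)) (Ioi t) x :=
    fun x hx => by
      simpa only [div_eq_mul_inv, mul_neg] using
        ((hasDerivAt_inv (ht.trans hx).ne').const_mul c).hasDerivWithinAt
  have hinj : InjOn (fun x => c / x) (Ioi t) := fun x hx y hy hxy =>
    inv_injective (mul_left_cancel₀ hc.ne' hxy)
  rw [← image_const_div_Ioi_of_pos ht hc,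
    integral_image_eq_integral_abs_deriv_smul measurableSet_Ioi hderiv hinj, ← integral_smul]
  refine setIntegral_congr_fun measurableSet_Ioi fun x hx => ?_
  have hx : 0 < x := ht.trans hx
  simp only [smul_smul]
  congr 1
  rw [abs_neg, abs_of_pos (by positivity), Real.div_rpow hc.le hx.le,
    Real.rpow_sub_one hc.ne', Real.rpow_sub_one hx.ne', Real.rpow_neg hc.le,
    Real.rpow_neg hx.le, Real.rpow_add hx, Real.rpow_one]
  have : 0 < c ^ r := Real.rpow_pos_of_pos hc r
  have : 0 < x ^ r := Real.rpow_pos_of_pos hx r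
  field_simp

namespace ProbabilityTheory

lemma paretoPDFReal_eq_indicator (t r : ℝ) :
    paretoPDFReal t r = (Ici t).indicator fun x => r * t ^ r * x ^ (-(r + 1)) := by
  ext x
  simp [paretoPDFReal, indicator]

lemma cdf_paretoMeasure {t r : ℝ} (ht : 0 < t) (hr : 0 < r) (x : ℝ) :
    cdf (paretoMeasure t r) x = if x < t then 0 else 1 - t ^ r * x ^ (-r) := by
  rw [cdf_paretoMeasure_eq_integral ht hr, paretoPDFReal_eq_indicator,
    setIntegral_indicator measurableSet_Ici, Iic_inter_Ici]
  split_ifs with hx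
  · rw [Icc_eq_empty_of_lt hx, Measure.restrict_empty, integral_zero_measure]
  · have hx : t ≤ x := not_lt.1 hx
    have h0 : (0 : ℝ) ∉ uIcc t x := by
      rw [uIcc_of_le hx]; exact fun h => ht.not_ge h.1
    rw [integral_Icc_eq_integral_Ioc, ← intervalIntegral.integral_of_le hx,
      intervalIntegral.integral_const_mul,
      integral_rpow (Or.inr ⟨by linarith, h0⟩), show -(r + 1) + 1 = -r by ring,
      Real.rpow_neg ht.le]
    have : t ^ r ≠ 0 := (Real.rpow_pos_of_pos ht r).ne'
    field_simp
    ring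

lemma measurable_paretoPDF (t r : ℝ) : Measurable (paretoPDF t r) :=
  (measurable_paretoPDFReal t r).ennreal_ofReal

lemma ae_le_paretoMeasure (t r : ℝ) : ∀ᵐ x ∂paretoMeasure t r, t ≤ x := by
  rw [paretoMeasure, ae_withDensity_iff (measurable_paretoPDF t r)]
  exact ae_of_all _ fun x hx => not_lt.1 fun h => hx (paretoPDF_of_lt h)

lemma integral_paretoMeasure {E : Type*} [NormedAddCommGroup E] [NormedSpace ℝ E]
    {t r : ℝ} (ht : 0 ≤ t) (hr : 0 ≤ r) (f : ℝ → E) :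
    ∫ x, f x ∂paretoMeasure t r = ∫ x in Ioi t, (r * t ^ r * x ^ (-(r + 1))) • f x := by
  rw [paretoMeasure, integral_withDensity_eq_integral_toReal_smul
    (measurable_paretoPDF t r) (ae_of_all _ fun _ => ENNReal.ofReal_lt_top)]
  have hpdf : ∀ x, (paretoPDF t r x).toReal • f x =
      (Ici t).indicator (fun x => (r * t ^ r * x ^ (-(r + 1))) • f x) x := fun x => by
    rw [paretoPDF, ENNReal.toReal_ofReal (paretoPDFReal_nonneg ht hr x),
      paretoPDFReal_eq_indicator, indicator_smul_apply_left]
  simp only [hpdf]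
  rw [integral_indicator measurableSet_Ici, integral_Ici_eq_integral_Ioi]

lemma integral_paretoMeasure_comp_const_div {E : Type*} [NormedAddCommGroup E]
    [NormedSpace ℝ E] {t r c : ℝ} (ht : 0 < t) (hr : 0 ≤ r) (hc : 0 < c) (g : ℝ → E) :
    ∫ x, g (c / x) ∂paretoMeasure t r =
      (r * t ^ r * c ^ (-r)) • ∫ u in Ioo 0 (c / t), u ^ (r - 1) • g u := by
  simp only [integral_paretoMeasure ht.le hr, mul_smul, integral_smul,
    integral_Ioi_rpow_smul_comp_const_div r ht hc]

lemma integrable_exp_neg_div_paretoMeasure {t r c : ℝ} (ht : 0 < t) (hr : 0 < r) (hc : 0 ≤ c) :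
    Integrable (fun x => Real.exp (-c / x)) (paretoMeasure t r) := by
  have := isProbabilityMeasure_paretoMeasure ht hr
  refine Integrable.of_mem_Icc 0 1 (by fun_prop) ?_
  filter_upwards [ae_le_paretoMeasure t r] with x hx
  exact ⟨(Real.exp_pos _).le, Real.exp_le_one_iff.2 <|
    div_nonpos_of_nonpos_of_nonneg (neg_nonpos.2 hc) (ht.le.trans hx)⟩

lemma map_eq_paretoMeasure {Ω : Type*} [MeasurableSpace Ω] {μ : Measure Ω}
    [IsProbabilityMeasure μ] {X : Ω → ℝ} (hX : Measurable X) {t r : ℝ} (ht : 0 < t) (hr : 0 < r)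
    (hcdf : ∀ x, (μ {ω | X ω ≤ x}).toReal = if x < t then 0 else 1 - t ^ r * x ^ (-r)) :
    μ.map X = paretoMeasure t r := by
  have := isProbabilityMeasure_paretoMeasure ht hr
  have := Measure.isProbabilityMeasure_map (μ := μ) hX.aemeasurable
  refine Measure.eq_of_cdf _ _ ?_
  ext x
  rw [cdf_paretoMeasure ht hr, cdf_eq_real, map_measureReal_apply hX measurableSet_Iic]
  exact hcdf x

end ProbabilityTheory

open ProbabilityTheory

theorem stmt_7_general {Ω : Type*} [MeasurableSpace Ω] (μ : Measure Ω) [IsProbabilityMeasure μ]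
    (η σ2 α D L : ℝ)
    (hη : 0 < η) (hσ : 0 < σ2) (hα : 2 < α) (hD : 0 < D) (hL : 0 < L)
    (X : Ω → ℝ) (hX : Measurable X)
    (hcdf : ∀ x : ℝ, (μ {ω | X ω ≤ x}).toReal =
      if x < D ^ (-α) then 0 else 1 - x ^ (-(2 / α)) / D ^ 2) :
    (∫ ω, (1 - Real.exp (-(η * σ2 * L) / X ω) / (1 + η) ^ (L - 1)) ∂μ) =
      1 - (2 / (α * D ^ 2 * (1 + η) ^ (L - 1))) *
        (∫ u in (0 : ℝ)..(η * σ2 * L * D ^ α), u ^ (2 / α - 1) * Real.exp (-u)) /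
          (η * σ2 * L) ^ (2 / α) := by
  set c := η * σ2 * L
  set B := (1 + η) ^ (L - 1)
  have hα₀ : 0 < α := by linarith
  have hc : 0 < c := by positivity
  have hp : 0 < 2 / α := by positivity
  have ha : 0 < D ^ (-α) := Real.rpow_pos_of_pos hD _
  have hscale : (D ^ (-α)) ^ (2 / α) = (D ^ 2)⁻¹ := by
    rw [← Real.rpow_mul hD.le, neg_mul, mul_div_cancel₀ _ hα₀.ne', Real.rpow_neg hD.le,
      Real.rpow_two]
  have hlaw : μ.map X = paretoMeasure (D ^ (-α)) (2 / α) := by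
    refine map_eq_paretoMeasure hX ha hp fun x => ?_
    rw [hcdf x, hscale, inv_mul_eq_div]
  have hmean : ∫ ω, Real.exp (-c / X ω) ∂μ =
      2 / α * (D ^ 2)⁻¹ * c ^ (-(2 / α)) *
        ∫ u in (0 : ℝ)..c * D ^ α, u ^ (2 / α - 1) * Real.exp (-u) := by
    rw [← integral_map (f := fun x => Real.exp (-c / x)) hX.aemeasurable (by fun_prop), hlaw]
    simp only [neg_div]
    rw [integral_paretoMeasure_comp_const_div ha hp.le hc (fun u => Real.exp (-u)), hscale,
      intervalIntegral.integral_of_le (by positivity), integral_Ioc_eq_integral_Ioo,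
      Real.rpow_neg hD.le, div_inv_eq_mul]
    simp only [smul_eq_mul]
  have hint : Integrable (fun ω => Real.exp (-c / X ω)) μ := by
    exact (hlaw ▸ integrable_exp_neg_div_paretoMeasure ha hp hc.le).comp_measurable hX
  rw [integral_sub (integrable_const 1) (hint.div_const B), integral_const, probReal_univ,
    one_smul, integral_div, hmean, Real.rpow_neg hc.le]
  field_simp

/-- Lemma 1 (single-cell heterogeneous users): if the path-loss random variable `X` has CDF
`Φ_G(x) = 1 - x^(-2/α)/D²` for `x ≥ D^(-α)` (and `0` below), then the expected conditional
outage probability equals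
`1 - (2/(α D² (1+η)^(L-1))) γ(2/α, η σ² L D^α) / (η σ² L)^(2/α)`. -/
theorem stmt_7 {Ω : Type*} [MeasurableSpace Ω] (μ : Measure Ω) [IsProbabilityMeasure μ]
    (η σ2 α D L : ℝ) (K : ℕ) (hK : 0 < K)
    (hη : 0 < η) (hσ : 0 < σ2) (hα : 2 < α) (hD : 0 < D) (hL : 0 < L)
    (X : Ω → ℝ) (hX : Measurable X)
    (hcdf : ∀ x : ℝ, (μ {ω | X ω ≤ x}).toReal =
      if x < D ^ (-α) then 0 else 1 - x ^ (-(2 / α)) / D ^ 2) :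
    (∫ ω, (1 - Real.exp (-(η * σ2 * L) / X ω) / (1 + η) ^ (L - 1)) ∂μ) =
      1 - (2 / (α * D ^ 2 * (1 + η) ^ (L - 1))) *
        (∫ u in (0 : ℝ)..(η * σ2 * L * D ^ α), u ^ (2 / α - 1) * Real.exp (-u)) /
          (η * σ2 * L) ^ (2 / α) :=
  stmt_7_general μ η σ2 α D L hη hσ hα hD hL X hX hcdf
end

section
/- Fix η > 0, σ² > 0, g > 0, L₂ > 0. The function L₁ ↦ exp(-η·σ²·L₁) / ((1+η)^{L₁-1} · (g·η·L₁/L₂ + 1)^{L₂}) is strictly decreasing on (0, ∞) and takes values in (0, 1+η]. -/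
/-- The per-beam success probability in the two-cell Wyner model,
`L₁ ↦ exp(-η σ² L₁)/((1+η)^(L₁-1) (g η L₁/L₂ + 1)^(L₂))`,
is strictly decreasing on `(0,∞)` and takes values in `(0, 1+η]`. -/
theorem stmt_9 (η σ2 g L₂ : ℝ) (hη : 0 < η) (hσ : 0 < σ2) (hg : 0 < g) (hL₂ : 0 < L₂) :
    StrictAntiOn
      (fun L₁ : ℝ =>
        Real.exp (-(η * σ2 * L₁)) / ((1 + η) ^ (L₁ - 1) * (g * η * L₁ / L₂ + 1) ^ L₂))
      (Set.Ioi 0) ∧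
    ∀ L₁ ∈ Set.Ioi (0 : ℝ),
      Real.exp (-(η * σ2 * L₁)) / ((1 + η) ^ (L₁ - 1) * (g * η * L₁ / L₂ + 1) ^ L₂) ∈
        Set.Ioc 0 (1 + η) := by
  have hb : (1:ℝ) < 1 + η := by linarith
  have hb0 : (0:ℝ) < 1 + η := by linarith
  constructor
  · intro x hx y hy hxy
    simp only [Set.mem_Ioi] at hx hy
    have hAx : (0:ℝ) < (1+η) ^ (x-1) := Real.rpow_pos_of_pos hb0 _
    have hBx : (0:ℝ) < (g*η*x/L₂+1) ^ L₂ := Real.rpow_pos_of_pos (by positivity) _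
    have hAy : (0:ℝ) < (1+η) ^ (y-1) := Real.rpow_pos_of_pos hb0 _
    have hBy : (0:ℝ) < (g*η*y/L₂+1) ^ L₂ := Real.rpow_pos_of_pos (by positivity) _
    have hA : (1+η) ^ (x-1) ≤ (1+η) ^ (y-1) :=
      Real.rpow_le_rpow_left_iff hb |>.mpr (by linarith)
    have hbase : g*η*x/L₂+1 ≤ g*η*y/L₂+1 := by gcongr
    have hB : (g*η*x/L₂+1) ^ L₂ ≤ (g*η*y/L₂+1) ^ L₂ :=
      Real.rpow_le_rpow (by positivity) hbase hL₂.le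
    have hN : Real.exp (-(η*σ2*y)) < Real.exp (-(η*σ2*x)) := by
      apply Real.exp_lt_exp.mpr
      have := mul_lt_mul_of_pos_left hxy (mul_pos hη hσ)
      linarith
    have hD : (1+η) ^ (x-1) * (g*η*x/L₂+1) ^ L₂ ≤ (1+η) ^ (y-1) * (g*η*y/L₂+1) ^ L₂ :=
      mul_le_mul hA hB hBx.le hAy.le
    calc Real.exp (-(η*σ2*y)) / ((1+η) ^ (y-1) * (g*η*y/L₂+1) ^ L₂)
        < Real.exp (-(η*σ2*x)) / ((1+η) ^ (y-1) * (g*η*y/L₂+1) ^ L₂) :=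
          (div_lt_div_iff_of_pos_right (by positivity)).mpr hN
      _ ≤ Real.exp (-(η*σ2*x)) / ((1+η) ^ (x-1) * (g*η*x/L₂+1) ^ L₂) :=
          div_le_div_of_nonneg_left (Real.exp_pos _).le (by positivity) hD
  · intro x hx
    simp only [Set.mem_Ioi] at hx
    have hBx : (0:ℝ) < (g*η*x/L₂+1) ^ L₂ := Real.rpow_pos_of_pos (by positivity) _
    constructor
    · positivity
    · have hA : (1+η) ^ ((-1 : ℝ)) ≤ (1+η) ^ (x-1) :=
        Real.rpow_le_rpow_left_iff hb |>.mpr (by linarith)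
      have hB : (1:ℝ) ≤ (g*η*x/L₂+1) ^ L₂ := by
        have hbase : (1:ℝ) ≤ g*η*x/L₂+1 := by
          have : (0:ℝ) < g*η*x/L₂ := by positivity
          linarith
        have := Real.rpow_le_rpow zero_le_one hbase hL₂.le
        simpa [Real.one_rpow] using this
      have hDge : (1+η)⁻¹ ≤ (1+η) ^ (x-1) * (g*η*x/L₂+1) ^ L₂ := by
        calc (1+η)⁻¹ = (1+η) ^ ((-1:ℝ)) := (Real.rpow_neg_one _).symm
          _ ≤ (1+η) ^ (x-1) := hA
          _ = (1+η) ^ (x-1) * 1 := (mul_one _).symm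
          _ ≤ (1+η) ^ (x-1) * (g*η*x/L₂+1) ^ L₂ :=
              mul_le_mul_of_nonneg_left hB (Real.rpow_pos_of_pos hb0 _).le
      have h1 : Real.exp (-(η*σ2*x)) ≤ 1 := by
        apply Real.exp_le_one_iff.mpr
        have : (0:ℝ) < η * σ2 * x := by positivity
        linarith
      calc Real.exp (-(η*σ2*x)) / ((1+η) ^ (x-1) * (g*η*x/L₂+1) ^ L₂)
          ≤ 1 / (1+η)⁻¹ := div_le_div₀ zero_le_one h1 (inv_pos.mpr hb0) hDge
        _ = 1 + η := by field_simp
end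

section
/- Fix η > 0, σ² > 0, g > 0, K a positive natural number, and 0 < p < 1. Define a = η·σ² + log(1+η) and d = log(1+η) - log(1-p^{1/K}) > 0. Consider the function L₂ ↦ -L₂/(gη) + (L₂/a)·W((a/(gη))·exp(d/L₂ + a/(gη))), which gives the maximal achievable L₁ in the Wyner model for fixed L₂ (Theorem 2 with b = L₂, c = gη/L₂). Then, as L₂ → 0⁺, this maximal L₁ tends to d/a. -/
open Filter

/-- As `L₂ → 0⁺`, the maximal achievable `L₁` in the Wyner model (Theorem 2),
`L₂ ↦ -L₂/(gη) + (L₂/a) W((a/(gη)) exp(d/L₂ + a/(gη)))`, tends to `d/a`, the single-cell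
bound. Here `W` is the principal Lambert W branch, specified by its defining property. -/
theorem stmt_15 (η σ2 g p : ℝ) (K : ℕ) (hK : 0 < K)
    (hη : 0 < η) (hσ : 0 < σ2) (hg : 0 < g) (hp0 : 0 < p) (hp1 : p < 1)
    (a d : ℝ) (ha : a = η * σ2 + Real.log (1 + η))
    (hd : d = Real.log (1 + η) - Real.log (1 - p ^ ((1 : ℝ) / K))) (hd0 : 0 < d)
    (W : ℝ → ℝ)
    (hW : ∀ x : ℝ, -Real.exp (-1) ≤ x → (-1 ≤ W x ∧ W x * Real.exp (W x) = x)) :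
    Tendsto
      (fun L₂ : ℝ =>
        -L₂ / (g * η) + (L₂ / a) * W ((a / (g * η)) * Real.exp (d / L₂ + a / (g * η))))
      (nhdsWithin 0 (Set.Ioi 0)) (nhds (d / a)) := by
  have hgη : 0 < g * η := mul_pos hg hη
  have hlog1 : 0 < Real.log (1 + η) := Real.log_pos (by linarith)
  have ha0 : 0 < a := by rw [ha]; have := mul_pos hη hσ; linarith
  set c : ℝ := a / (g * η) with hc
  have hc0 : 0 < c := div_pos ha0 hgη
  -- basic facts about w L := W (c * exp (d/L + c)) for L > 0
  have hXpos : ∀ L : ℝ, 0 < c * Real.exp (d / L + c) := fun L =>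
    mul_pos hc0 (Real.exp_pos _)
  have hXW : ∀ L : ℝ, -1 ≤ W (c * Real.exp (d / L + c)) ∧
      W (c * Real.exp (d / L + c)) * Real.exp (W (c * Real.exp (d / L + c)))
        = c * Real.exp (d / L + c) := fun L =>
    hW _ (le_trans (neg_nonpos.mpr (Real.exp_pos _).le) (hXpos L).le)
  have hwpos : ∀ L : ℝ, 0 < W (c * Real.exp (d / L + c)) := by
    intro L
    by_contra h
    push_neg at h
    have h2 := (hXW L).2
    have : W (c * Real.exp (d / L + c)) * Real.exp (W (c * Real.exp (d / L + c))) ≤ 0 :=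
      mul_nonpos_of_nonpos_of_nonneg h (Real.exp_pos _).le
    linarith [hXpos L, h2 ▸ this]
  -- log of the defining equation:  log w + w = log c + (d/L + c)
  have hlogeq : ∀ L : ℝ, Real.log (W (c * Real.exp (d / L + c)))
      + W (c * Real.exp (d / L + c)) = Real.log c + (d / L + c) := by
    intro L
    have h2 := (hXW L).2
    have := congrArg Real.log h2
    rwa [Real.log_mul (hwpos L).ne' (Real.exp_pos _).ne', Real.log_exp,
      Real.log_mul hc0.ne' (Real.exp_pos _).ne', Real.log_exp] at this
  -- eventual equality of the function with (d + L*log c - L*log w)/a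
  have hkey : ∀ᶠ L in nhdsWithin (0:ℝ) (Set.Ioi 0),
      -L / (g * η) + (L / a) * W (c * Real.exp (d / L + c))
        = (d + L * Real.log c - L * Real.log (W (c * Real.exp (d / L + c)))) / a := by
    filter_upwards [self_mem_nhdsWithin] with L (hL : 0 < L)
    have hleq := hlogeq L
    have hLd : L * (d / L) = d := by field_simp
    have hLw : L * W (c * Real.exp (d / L + c))
        = L * Real.log c + d + L * c - L * Real.log (W (c * Real.exp (d / L + c))) := by
      have h' := congrArg (fun t => L * t) hleq
      simp only [mul_add] at h'
      rw [hLd] at h'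
      linarith
    have hdiv : -L / (g * η) = -(L * c) / a := by
      rw [hc]; field_simp
    rw [hdiv]
    have hsplit : -(L * c) / a + L / a * W (c * Real.exp (d / L + c))
        = (L * W (c * Real.exp (d / L + c)) - L * c) / a := by ring
    rw [hsplit]
    congr 1
    linarith
  -- the limit of the simplified expression
  have hlim : Tendsto
      (fun L : ℝ => (d + L * Real.log c - L * Real.log (W (c * Real.exp (d / L + c)))) / a)
      (nhdsWithin 0 (Set.Ioi 0)) (nhds (d / a)) := by
    have h1 : Tendsto (fun L : ℝ => L * Real.log c) (nhdsWithin (0:ℝ) (Set.Ioi 0)) (nhds 0) := by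
      have : Tendsto (fun L : ℝ => L * Real.log c) (nhds 0) (nhds (0 * Real.log c)) :=
        (continuous_id.mul continuous_const).tendsto 0
      simpa using this.mono_left nhdsWithin_le_nhds
    -- squeeze for L * log (w L)
    have h2 : Tendsto (fun L : ℝ => L * Real.log (W (c * Real.exp (d / L + c))))
        (nhdsWithin (0:ℝ) (Set.Ioi 0)) (nhds 0) := by
      set M : ℝ := d + |Real.log c + c| + 1 with hM
      have hM1 : 1 ≤ M := by
        have := abs_nonneg (Real.log c + c)
        simp only [hM]; linarith
      have hδ : 0 < min 1 (d / (1 + |Real.log c + c|)) :=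
        lt_min one_pos (div_pos hd0 (by positivity))
      have hmem : Set.Ioo (0:ℝ) (min 1 (d / (1 + |Real.log c + c|)))
          ∈ nhdsWithin (0:ℝ) (Set.Ioi 0) :=
        Ioo_mem_nhdsGT_of_mem ⟨le_refl 0, hδ⟩
      -- on this interval: 1 ≤ log X and log X ≤ M / L
      have hbounds : ∀ L ∈ Set.Ioo (0:ℝ) (min 1 (d / (1 + |Real.log c + c|))),
          (1 ≤ Real.log c + (d / L + c)) ∧ Real.log c + (d / L + c) ≤ M / L := by
        intro L hL
        obtain ⟨hL0, hLu⟩ := hL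
        have hL1 : L ≤ 1 := le_of_lt (lt_of_lt_of_le hLu (min_le_left _ _))
        have hL2 : L ≤ d / (1 + |Real.log c + c|) :=
          le_of_lt (lt_of_lt_of_le hLu (min_le_right _ _))
        have hdL : 1 + |Real.log c + c| ≤ d / L := by
          rw [le_div_iff₀ hL0]
          calc (1 + |Real.log c + c|) * L ≤ (1 + |Real.log c + c|) * (d / (1 + |Real.log c + c|)) := by
                apply mul_le_mul_of_nonneg_left hL2 (by positivity)
            _ = d := by field_simp
        constructor
        · have : -(Real.log c + c) ≤ |Real.log c + c| := neg_le_abs _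
          linarith
        · rw [hM, le_div_iff₀ hL0]
          have habs : Real.log c + c ≤ |Real.log c + c| := le_abs_self _
          have h1L : |Real.log c + c| * L ≤ |Real.log c + c| * 1 :=
            mul_le_mul_of_nonneg_left hL1 (abs_nonneg _)
          have : (Real.log c + (d / L + c)) * L = (Real.log c + c) * L + d := by
            field_simp
            ring
          rw [this]
          nlinarith [abs_nonneg (Real.log c + c), hL0]
      -- on this interval: 1 ≤ w L and log (w L) ≤ log (M / L)
      have hwbounds : ∀ L ∈ Set.Ioo (0:ℝ) (min 1 (d / (1 + |Real.log c + c|))),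
          0 ≤ Real.log (W (c * Real.exp (d / L + c))) ∧
          Real.log (W (c * Real.exp (d / L + c))) ≤ Real.log (M / L) := by
        intro L hL
        obtain ⟨hlogX1, hlogXM⟩ := hbounds L hL
        set w := W (c * Real.exp (d / L + c)) with hw
        have hXe : Real.exp 1 ≤ c * Real.exp (d / L + c) := by
          have heq : Real.exp (Real.log c + (d / L + c)) = c * Real.exp (d / L + c) := by
            rw [Real.exp_add, Real.exp_log hc0]
          rw [← heq]
          exact Real.exp_le_exp.mpr hlogX1
        have hw1 : 1 ≤ w := by
          by_contra hlt
          push_neg at hlt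
          have h2 := (hXW L).2
          have hwp := hwpos L
          have : w * Real.exp w < 1 * Real.exp 1 := by
            apply mul_lt_mul' hlt.le (Real.exp_lt_exp.mpr hlt) (Real.exp_pos _).le one_pos
          rw [h2, one_mul] at this
          linarith
        have hwle : w ≤ Real.log c + (d / L + c) := by
          have := hlogeq L
          have hlogw : 0 ≤ Real.log w := Real.log_nonneg hw1
          linarith
        refine ⟨Real.log_nonneg hw1, ?_⟩
        apply Real.log_le_log (by linarith [hwpos L])
        exact le_trans hwle hlogXM
      -- squeeze
      have hupper : Tendsto (fun L : ℝ => L * Real.log (M / L))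
          (nhdsWithin (0:ℝ) (Set.Ioi 0)) (nhds 0) := by
        have hlogdiv : ∀ᶠ L in nhdsWithin (0:ℝ) (Set.Ioi 0),
            L * Real.log (M / L) = L * Real.log M - Real.log L * L := by
          filter_upwards [self_mem_nhdsWithin] with L (hL : 0 < L)
          rw [Real.log_div (by positivity) hL.ne']
          ring
        have hA : Tendsto (fun L : ℝ => L * Real.log M)
            (nhdsWithin (0:ℝ) (Set.Ioi 0)) (nhds 0) := by
          have : Tendsto (fun L : ℝ => L * Real.log M) (nhds 0) (nhds (0 * Real.log M)) :=
            (continuous_id.mul continuous_const).tendsto 0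
          simpa using this.mono_left nhdsWithin_le_nhds
        have hB : Tendsto (fun L : ℝ => Real.log L * L)
            (nhdsWithin (0:ℝ) (Set.Ioi 0)) (nhds 0) := by
          have := tendsto_log_mul_rpow_nhdsGT_zero (r := 1) one_pos
          simpa using this
        have := hA.sub hB
        rw [sub_zero] at this
        exact Tendsto.congr' (hlogdiv.mono fun L h => h.symm) this
      apply tendsto_of_tendsto_of_tendsto_of_le_of_le' tendsto_const_nhds hupper
      · filter_upwards [hmem] with L hL
        exact mul_nonneg hL.1.le (hwbounds L hL).1
      · filter_upwards [hmem] with L hL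
        exact mul_le_mul_of_nonneg_left (hwbounds L hL).2 hL.1.le
    have hconst : Tendsto (fun _ : ℝ => d) (nhdsWithin (0:ℝ) (Set.Ioi 0)) (nhds d) :=
      tendsto_const_nhds
    have := ((hconst.add h1).sub h2).div_const a
    simpa using this
  exact Tendsto.congr' (hkey.mono fun L h => h.symm) (by simpa using hlim)
end

section
/- Let Z ~ Exp(1), A_l ~ Exp(1) (l = 1,...,n), B_t ~ Exp(1) (t = 1,...,m) be independent, and let σ² > 0 and r > 0 be constants. Then the random variable S = Z / (σ² + ∑_l A_l + r·∑_t B_t) satisfies P(S ≤ x) = 1 - e^{-xσ²} / ((1+x)^n · (1+r·x)^m) for all x ≥ 0. -/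
open MeasureTheory ProbabilityTheory

namespace Stmt18Aux

open MeasureTheory ProbabilityTheory Real Filter Set

lemma iIndepFun_congr {Ω ι : Type*} [MeasurableSpace Ω] {μ : Measure Ω} [Countable ι]
    {β : ι → Type*} {mβ : ∀ i, MeasurableSpace (β i)} {f g : ∀ i, Ω → β i}
    (hf : iIndepFun f μ) (hfg : ∀ i, f i =ᵐ[μ] g i) : iIndepFun g μ := by
  rw [iIndepFun_iff_measure_inter_preimage_eq_mul] at hf ⊢
  intro S sets hsets
  have key : ∀ i, (g i ⁻¹' sets i : Set Ω) =ᵐ[μ] f i ⁻¹' sets i := fun i =>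
    eventuallyEq_set.mpr ((hfg i).mono fun ω h => by
      simp only [Set.mem_preimage, h])
  have hmem : ∀ᵐ ω ∂μ, ∀ i, (ω ∈ g i ⁻¹' sets i ↔ ω ∈ f i ⁻¹' sets i) :=
    ae_all_iff.mpr fun i => eventuallyEq_set.mp (key i)
  have h1 : (⋂ i ∈ S, g i ⁻¹' sets i : Set Ω) =ᵐ[μ] (⋂ i ∈ S, f i ⁻¹' sets i) := by
    rw [eventuallyEq_set]
    filter_upwards [hmem] with ω h
    simp only [Set.mem_iInter]
    exact ⟨fun H i hi => (h i).mp (H i hi), fun H i hi => (h i).mpr (H i hi)⟩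
  rw [measure_congr h1, hf S hsets]
  exact Finset.prod_congr rfl fun i _ => measure_congr (key i).symm

lemma exp_lint (s : ℝ) (hs : 0 ≤ s) :
    ∫⁻ y, ENNReal.ofReal (rexp (-(s * y))) ∂(expMeasure 1) = ENNReal.ofReal (1 / (1 + s)) := by
  have h1s : (0:ℝ) < 1 + s := by linarith
  have hmeas : Measurable fun y : ℝ => ENNReal.ofReal (rexp (-(s * y))) := by
    exact (((measurable_const_mul s).neg).exp).ennreal_ofReal
  have hpdf : Measurable (gammaPDF 1 1) := (measurable_gammaPDFReal 1 1).ennreal_ofReal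
  rw [expMeasure, gammaMeasure, lintegral_withDensity_eq_lintegral_mul _ hpdf hmeas]
  have hpt : ∀ y, (gammaPDF 1 1 * fun y => ENNReal.ofReal (rexp (-(s * y)))) y
      = ENNReal.ofReal (1 / (1 + s)) * exponentialPDF (1 + s) y := by
    intro y
    simp only [Pi.mul_apply]
    have hgp : gammaPDF 1 1 y = exponentialPDF 1 y := rfl
    rcases lt_or_ge y 0 with hy | hy
    · rw [hgp, exponentialPDF_of_neg hy, exponentialPDF_of_neg hy]; simp
    · rw [hgp, exponentialPDF_of_nonneg hy, exponentialPDF_of_nonneg hy,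
        ← ENNReal.ofReal_mul (by positivity), ← ENNReal.ofReal_mul (by positivity)]
      congr 1
      rw [one_mul, one_mul, ← Real.exp_add, show (-y + -(s * y)) = -((1+s)*y) by ring]
      field_simp
  rw [lintegral_congr hpt, lintegral_const_mul _ (by exact (measurable_exponentialPDFReal (1+s)).ennreal_ofReal),
    lintegral_exponentialPDF_eq_one h1s, mul_one]

lemma exp_integrable (s : ℝ) (hs : 0 ≤ s) :
    Integrable (fun y => rexp (-(s * y))) (expMeasure 1) := by
  have : IsProbabilityMeasure (expMeasure 1) := isProbabilityMeasure_expMeasure one_pos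
  refine ⟨(((measurable_const_mul s).neg).exp).aestronglyMeasurable, ?_⟩
  rw [hasFiniteIntegral_iff_ofReal (Filter.Eventually.of_forall fun y => (Real.exp_pos _).le),
    exp_lint s hs]
  exact ENNReal.ofReal_lt_top

lemma exp_integral (s : ℝ) (hs : 0 ≤ s) :
    ∫ y, rexp (-(s * y)) ∂(expMeasure 1) = 1 / (1 + s) := by
  have : IsProbabilityMeasure (expMeasure 1) := isProbabilityMeasure_expMeasure one_pos
  rw [integral_eq_lintegral_of_nonneg_ae (f := fun y => rexp (-(s * y))) (Filter.Eventually.of_forall fun y => (Real.exp_pos _).le)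
      (((measurable_const_mul s).neg).exp).aestronglyMeasurable, exp_lint s hs,
    ENNReal.toReal_ofReal (by positivity)]

lemma expMeasure_Iic {y : ℝ} (hy : 0 ≤ y) :
    expMeasure 1 (Iic y) = ENNReal.ofReal (1 - rexp (-y)) := by
  have : IsProbabilityMeasure (expMeasure 1) := isProbabilityMeasure_expMeasure one_pos
  have h2 : (expMeasure 1 (Iic y)).toReal = 1 - rexp (-y) := by
    show (expMeasure 1).real (Iic y) = _
    rw [← cdf_eq_real]
    have h := cdf_expMeasure_eq one_pos y
    simpa [hy, one_mul] using h
  rw [← h2, ENNReal.ofReal_toReal (measure_ne_top _ _)]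

lemma expMeasure_neg : expMeasure 1 (Iio (0:ℝ)) = 0 := by
  rw [expMeasure, gammaMeasure, withDensity_apply _ measurableSet_Iio]
  exact lintegral_gammaPDF_of_nonpos le_rfl

end Stmt18Aux

open Stmt18Aux Real Filter Set

/-- Distributional core of Lemma 2: with `Z, A 1, ..., A n, B 1, ..., B m` independent rate-1
exponential random variables, `σ² > 0`, `r > 0`, the random variable
`S = Z / (σ² + ∑ₗ A l + r ∑ₜ B t)` satisfies
`P(S ≤ x) = 1 - e^(-x σ²) / ((1+x)^n (1+r x)^m)` for all `x ≥ 0`. -/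
theorem stmt_18 {Ω : Type*} [MeasurableSpace Ω] (μ : Measure Ω) [IsProbabilityMeasure μ]
    (n m : ℕ) (σ2 r : ℝ) (hσ : 0 < σ2) (hr : 0 < r)
    (Y : Option (Fin n ⊕ Fin m) → Ω → ℝ)
    (hindep : iIndepFun Y μ)
    (hlaw : ∀ i, Measure.map (Y i) μ = expMeasure 1) :
    ∀ x : ℝ, 0 ≤ x →
      (μ {ω | Y none ω /
          (σ2 + (∑ l : Fin n, Y (some (Sum.inl l)) ω) +
            r * ∑ t : Fin m, Y (some (Sum.inr t)) ω) ≤ x}).toReal =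
        1 - Real.exp (-x * σ2) / ((1 + x) ^ n * (1 + r * x) ^ m) := by
  classical
  intro x hx
  have hPM : IsProbabilityMeasure (expMeasure 1) := isProbabilityMeasure_expMeasure one_pos
  have hYae : ∀ j, AEMeasurable (Y j) μ := by
    intro j
    by_contra h
    have h0 := hlaw j
    rw [Measure.map_of_not_aemeasurable h] at h0
    exact (IsProbabilityMeasure.ne_zero (expMeasure 1)) h0.symm
  set Y' : Option (Fin n ⊕ Fin m) → Ω → ℝ := fun j => (hYae j).mk (Y j) with hY'def
  have hY'meas : ∀ j, Measurable (Y' j) := fun j => (hYae j).measurable_mk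
  have hY'ae : ∀ j, Y j =ᵐ[μ] Y' j := fun j => (hYae j).ae_eq_mk
  have hindep' : iIndepFun Y' μ := iIndepFun_congr hindep hY'ae
  have hlaw' : ∀ j, Measure.map (Y' j) μ = expMeasure 1 := fun j => by
    rw [← Measure.map_congr (hY'ae j), hlaw j]
  have hnonneg : ∀ j, ∀ᵐ ω ∂μ, 0 ≤ Y' j ω := by
    intro j
    have h0 : μ (Y' j ⁻¹' Iio 0) = 0 := by
      rw [← Measure.map_apply (hY'meas j) measurableSet_Iio, hlaw' j]
      exact expMeasure_neg
    have := measure_mono_null (fun ω (hω : ¬ (0:ℝ) ≤ Y' j ω) => (by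
      simpa [Set.mem_preimage, Set.mem_Iio] using not_le.mp hω : ω ∈ Y' j ⁻¹' Iio 0)) h0
    exact (ae_iff).mpr this
  -- coefficients and scaled variables
  set c : Option (Fin n ⊕ Fin m) → ℝ :=
    fun j => Option.elim j 1 (Sum.elim (fun _ => 1) (fun _ => r)) with hcdef
  have hc : ∀ j, 0 ≤ c j := by
    rintro (_ | (l | t)) <;> simp [c] <;> positivity
  set X : Option (Fin n ⊕ Fin m) → Ω → ℝ := fun j ω => c j * Y' j ω with hXdef
  have hXmeas : ∀ j, Measurable (X j) := fun j => (hY'meas j).const_mul _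
  have hXindep : iIndepFun X μ :=
    hindep'.comp (fun j y => c j * y) (fun j => measurable_const_mul _)
  have hXnone : X none = Y' none := funext fun ω => one_mul _
  set s : Finset (Option (Fin n ⊕ Fin m)) := Finset.univ.image some with hsdef
  have hns : none ∉ s := by simp [s]
  set T : Ω → ℝ := ∑ j ∈ s, X j with hTdef
  have hT : ∀ ω, T ω = (∑ l : Fin n, Y' (some (Sum.inl l)) ω) +
      r * ∑ t : Fin m, Y' (some (Sum.inr t)) ω := by
    intro ω
    rw [hTdef, Finset.sum_apply, hsdef,
      Finset.sum_image (fun a _ b _ h => Option.some_injective _ h),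
      Fintype.sum_sum_type]
    simp only [X, c, Option.elim, Sum.elim_inl, Sum.elim_inr, one_mul]
    rw [Finset.mul_sum]
  have hTmeas : Measurable T := by
    have heq : T = fun ω => ∑ j ∈ s, X j ω := funext fun ω => by rw [hTdef, Finset.sum_apply]
    rw [heq]; exact Finset.measurable_sum s (fun j _ => hXmeas j)
  set W : Ω → ℝ := fun ω => σ2 + T ω with hWdef
  have hWmeas : Measurable W := measurable_const.add hTmeas
  have hTnonneg : ∀ᵐ ω ∂μ, 0 ≤ T ω := by
    have hall : ∀ᵐ ω ∂μ, ∀ j, 0 ≤ Y' j ω := ae_all_iff.mpr hnonneg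
    filter_upwards [hall] with ω h
    rw [hT ω]
    have h1 : (0:ℝ) ≤ ∑ l : Fin n, Y' (some (Sum.inl l)) ω :=
      Finset.sum_nonneg fun l _ => h _
    have h2 : (0:ℝ) ≤ ∑ t : Fin m, Y' (some (Sum.inr t)) ω :=
      Finset.sum_nonneg fun t _ => h _
    positivity
  -- event rewriting
  have hae_event : {ω | Y none ω /
      (σ2 + (∑ l : Fin n, Y (some (Sum.inl l)) ω) +
        r * ∑ t : Fin m, Y (some (Sum.inr t)) ω) ≤ x}
      =ᵐ[μ] {ω | Y' none ω ≤ x * W ω} := by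
    have hall : ∀ᵐ ω ∂μ, ∀ j, Y j ω = Y' j ω := ae_all_iff.mpr hY'ae
    rw [eventuallyEq_set]
    filter_upwards [hall, hTnonneg] with ω h1 h2
    have hWpos : 0 < W ω := by rw [hWdef]; dsimp only; linarith
    have hden : σ2 + (∑ l : Fin n, Y (some (Sum.inl l)) ω) +
        r * ∑ t : Fin m, Y (some (Sum.inr t)) ω = W ω := by
      rw [hWdef]; dsimp only; rw [hT ω]
      simp only [h1]; ring
    simp only [Set.mem_setOf_eq, h1 none, hden]
    rw [div_le_iff₀ hWpos, mul_comm]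
  -- independence of W and Y' none
  have hTZ : IndepFun T (Y' none) μ := by
    rw [← hXnone, hTdef]
    exact hXindep.indepFun_finsetSum_of_notMem hXmeas hns
  have hWZ : IndepFun W (Y' none) μ :=
    hTZ.comp (measurable_const.add measurable_id) measurable_id
  have hmap : μ.map (fun ω => (W ω, Y' none ω)) = (μ.map W).prod (μ.map (Y' none)) :=
    (indepFun_iff_map_prod_eq_prod_map_map hWmeas.aemeasurable
      (hY'meas none).aemeasurable).mp hWZ
  have hset : MeasurableSet {p : ℝ × ℝ | p.2 ≤ x * p.1} :=
    measurableSet_le measurable_snd (measurable_fst.const_mul x)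
  have hμE : μ {ω | Y' none ω ≤ x * W ω}
      = ∫⁻ w, expMeasure 1 (Iic (x * w)) ∂(μ.map W) := by
    have he : {ω | Y' none ω ≤ x * W ω}
        = (fun ω => (W ω, Y' none ω)) ⁻¹' {p | p.2 ≤ x * p.1} := rfl
    rw [he, ← Measure.map_apply (hWmeas.prodMk (hY'meas none)) hset, hmap,
      Measure.prod_apply hset]
    refine lintegral_congr fun w => ?_
    have : (Prod.mk w ⁻¹' {p : ℝ × ℝ | p.2 ≤ x * p.1}) = Iic (x * w) := rfl
    rw [this, hlaw' none]
  have hWσ : ∀ᵐ ω ∂μ, σ2 ≤ W ω := by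
    filter_upwards [hTnonneg] with ω h
    rw [hWdef]; dsimp only; linarith
  have hmap_ae : ∀ᵐ w ∂(μ.map W), σ2 ≤ w := by
    rw [ae_map_iff hWmeas.aemeasurable measurableSet_Ici]
    exact hWσ
  have hμE2 : ∫⁻ w, expMeasure 1 (Iic (x * w)) ∂(μ.map W)
      = ∫⁻ ω, (1 - ENNReal.ofReal (rexp (-(x * W ω)))) ∂μ := by
    rw [lintegral_congr_ae (g := fun w => 1 - ENNReal.ofReal (rexp (-(x * w)))) ?_,
      lintegral_map ?_ hWmeas]
    · exact (measurable_const.sub ((((measurable_const_mul x).neg).exp).ennreal_ofReal))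
    · filter_upwards [hmap_ae] with w hw
      have hxw : 0 ≤ x * w := mul_nonneg hx (le_trans hσ.le hw)
      rw [expMeasure_Iic hxw, ENNReal.ofReal_sub _ (Real.exp_pos _).le, ENNReal.ofReal_one]
  have hle1 : (fun ω => ENNReal.ofReal (rexp (-(x * W ω)))) ≤ᵐ[μ] fun _ => (1:ENNReal) := by
    filter_upwards [hWσ] with ω hω
    have : rexp (-(x * W ω)) ≤ 1 := Real.exp_le_one_iff.mpr (by nlinarith)
    exact ENNReal.ofReal_le_one.mpr this
  have hIfin : ∫⁻ ω, ENNReal.ofReal (rexp (-(x * W ω))) ∂μ ≠ ⊤ := by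
    refine ne_of_lt (lt_of_le_of_lt (lintegral_mono_ae hle1) ?_)
    simp [lintegral_const]
  have hsub : ∫⁻ ω, (1 - ENNReal.ofReal (rexp (-(x * W ω)))) ∂μ
      = 1 - ∫⁻ ω, ENNReal.ofReal (rexp (-(x * W ω))) ∂μ := by
    have hgmeas : Measurable fun ω => ENNReal.ofReal (rexp (-(x * W ω))) :=
      ((((measurable_const_mul x).neg).exp).ennreal_ofReal).comp hWmeas
    rw [lintegral_sub hgmeas hIfin hle1]
    simp [lintegral_const]
  -- integrability of exp factors
  have hexpXint : ∀ j, Integrable (fun ω => rexp ((-x) * X j ω)) μ := by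
    intro j
    have hg : Measurable fun y : ℝ => rexp (-((x * c j) * y)) :=
      ((measurable_const_mul _).neg).exp
    have h1 : Integrable (fun y => rexp (-((x * c j) * y))) (Measure.map (Y' j) μ) := by
      rw [hlaw' j]; exact exp_integrable _ (mul_nonneg hx (hc j))
    have h2 := (integrable_map_measure hg.aestronglyMeasurable (hY'meas j).aemeasurable).mp h1
    refine h2.congr (Filter.Eventually.of_forall fun ω => ?_)
    show rexp (-((x * c j) * Y' j ω)) = rexp ((-x) * X j ω)
    rw [hXdef]; congr 1; ring
  have hintT : Integrable (fun ω => rexp ((-x) * T ω)) μ := by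
    have h0 := hXindep.integrable_exp_mul_sum (t := -x) hXmeas (s := s)
      (fun j _ => hexpXint j)
    refine h0.congr (Filter.Eventually.of_forall fun ω => ?_)
    rw [← hTdef]
  have hWexp : ∀ ω, rexp (-(x * W ω)) = rexp (-(x * σ2)) * rexp ((-x) * T ω) := by
    intro ω
    rw [← Real.exp_add, hWdef]; congr 1; ring
  have hintW : Integrable (fun ω => rexp (-(x * W ω))) μ := by
    simp_rw [hWexp]; exact hintT.const_mul _
  -- mgf values
  have hmgf : ∀ j, mgf (X j) μ (-x) = 1 / (1 + x * c j) := by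
    intro j
    have hg : Measurable fun y : ℝ => rexp (-((x * c j) * y)) :=
      ((measurable_const_mul _).neg).exp
    have h1 : mgf (X j) μ (-x) = ∫ ω, rexp (-((x * c j) * Y' j ω)) ∂μ := by
      unfold mgf
      refine integral_congr_ae (Filter.Eventually.of_forall fun ω => ?_)
      show rexp ((-x) * X j ω) = rexp (-((x * c j) * Y' j ω))
      rw [hXdef]; congr 1; ring
    rw [h1, ← integral_map (hY'meas j).aemeasurable hg.aestronglyMeasurable, hlaw' j,
      exp_integral _ (mul_nonneg hx (hc j))]
  have hprod : ∏ j ∈ s, mgf (X j) μ (-x) = (1/(1+x))^n * (1/(1+r*x))^m := by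
    rw [hsdef, Finset.prod_image (fun a _ b _ h => Option.some_injective _ h),
      Fintype.prod_sum_type]
    simp only [hmgf, c, Option.elim, Sum.elim_inl, Sum.elim_inr]
    rw [Finset.prod_const, Finset.prod_const]
    simp only [Finset.card_univ, Fintype.card_fin]
    ring_nf
  have hIval : ∫ ω, rexp (-(x * W ω)) ∂μ
      = rexp (-(x * σ2)) * ((1/(1+x))^n * (1/(1+r*x))^m) := by
    simp_rw [hWexp]
    rw [integral_const_mul]
    congr 1
    have hmgfT : ∫ ω, rexp ((-x) * T ω) ∂μ = mgf T μ (-x) := rfl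
    rw [hmgfT, hTdef, iIndepFun.mgf_sum hXindep hXmeas s, hprod]
  have hlint : ∫⁻ ω, ENNReal.ofReal (rexp (-(x * W ω))) ∂μ
      = ENNReal.ofReal (rexp (-(x * σ2)) * ((1/(1+x))^n * (1/(1+r*x))^m)) := by
    rw [← ofReal_integral_eq_lintegral_ofReal hintW
      (Filter.Eventually.of_forall fun ω => (Real.exp_pos _).le), hIval]
  -- final assembly
  have h1x : (0:ℝ) < 1 + x := by linarith
  have h1rx : (0:ℝ) < 1 + r * x := by nlinarith
  have hval_nonneg : 0 ≤ rexp (-(x * σ2)) * ((1/(1+x))^n * (1/(1+r*x))^m) := by positivity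
  have hval_le1 : rexp (-(x * σ2)) * ((1/(1+x))^n * (1/(1+r*x))^m) ≤ 1 := by
    have h1 : rexp (-(x * σ2)) ≤ 1 := Real.exp_le_one_iff.mpr (by nlinarith)
    have h2 : (1/(1+x))^n ≤ 1 := pow_le_one₀ (by positivity) (by rw [div_le_one h1x]; linarith)
    have h3 : (1/(1+r*x))^m ≤ 1 :=
      pow_le_one₀ (by positivity) (by rw [div_le_one h1rx]; nlinarith)
    have h4 : (1/(1+x))^n * (1/(1+r*x))^m ≤ 1 := mul_le_one₀ h2 (by positivity) h3
    exact mul_le_one₀ h1 (by positivity) h4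
  rw [measure_congr hae_event, hμE, hμE2, hsub, hlint,
    ENNReal.toReal_sub_of_le (ENNReal.ofReal_le_one.mpr hval_le1) ENNReal.one_ne_top,
    ENNReal.toReal_one, ENNReal.toReal_ofReal hval_nonneg]
  congr 1
  rw [show (-x * σ2) = -(x * σ2) by ring]
  field_simp
  simp only [one_div, inv_pow]
  field_simp
end
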